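/- If for all N and all complex tuples (a_n)_{n=1}^N there holds ∑_{n=1}^N |a_n| ≤ c N^{σ₀} ∫₀¹ |∑_{n=1}^N r_n(t) a_n| dt, and additionally (by Khinchin) ∫₀¹|∑_n r_n(t)a_n| dt ≤ (∑_n|a_n|²)^{1/2}, then taking a_n = 1 for all n gives N ≤ c N^{σ₀} N^{1/2}, hence σ₀ ≥ 1/2. Thus Hartman's constant S^rad_{c→a}(ℂ) = sup over Dirichlet series D of σ_a(D) − σ^rad_c(D) satisfies S^rad_{c→a}(ℂ) ≥ 1/2, and combined with the Cauchy–Schwarz upper bound, S^rad_{c→a}(ℂ) = 1/2. -/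

import Mathlib

open MeasureTheory Filter Finset

/-
Write `S(t) = ∑_{n<N} rₙ(t) aₙ`. Splitting `[0,1]` according to the sign of `r₀` gives
`∫₀¹ G(S) = ½ ∫₀¹ (G(S' + a₀) + G(S' - a₀))` with `S'` built from `a₁, a₂, …`; by induction this
yields `∫ ‖S‖² = ∑ ‖aₙ‖²` (parallelogram law) and `∫ ‖S‖⁴ ≤ 3 (∑ ‖aₙ‖²)²`, hence Khinchin's
inequalities `‖S‖₁ ≤ (∑ ‖aₙ‖²)^{1/2} ≤ √3 ‖S‖₁`. With all `aₙ = 1` the upper one turns the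
hypothesis into `N ≤ c N^{σ₀} N^{1/2}`, forcing `σ₀ ≥ 1/2`; the lower one with Cauchy–Schwarz
`∑ ‖aₙ‖ ≤ N^{1/2} (∑ ‖aₙ‖²)^{1/2}` shows that `σ = 1/2` is admissible.
-/

/-- The `n`-th Rademacher function on `[0,1]`. -/
noncomputable def rad (n : ℕ) (t : ℝ) : ℝ :=
  if Int.fract ((2 ^ n : ℝ) * t) < 1 / 2 then 1 else -1

lemma measurable_rad (n : ℕ) : Measurable (rad n) :=
  Measurable.ite (measurableSet_lt (measurable_const.mul measurable_id).fract measurable_const)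
    measurable_const measurable_const

lemma abs_rad (n : ℕ) (t : ℝ) : |rad n t| = 1 := by
  unfold rad; split <;> simp

lemma rad_succ (n : ℕ) (t : ℝ) : rad (n + 1) t = rad n (2 * t) := by
  rw [rad, rad, pow_succ, mul_assoc]

lemma rad_add_one (n : ℕ) (t : ℝ) : rad n (t + 1) = rad n t := by
  have : (2 : ℝ) ^ n * (t + 1) = 2 ^ n * t + ((2 ^ n : ℕ) : ℤ) := by push_cast; ring
  rw [rad, rad, this, Int.fract_add_intCast]

lemma rad_zero_of_mem_Ico_zero_half {t : ℝ} (ht : t ∈ Set.Ico 0 (1 / 2)) : rad 0 t = 1 := by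
  rw [rad, pow_zero, one_mul, Int.fract_eq_self.2 ⟨ht.1, by linarith [ht.2]⟩, if_pos ht.2]

lemma rad_zero_of_mem_Ico_half_one {t : ℝ} (ht : t ∈ Set.Ico (1 / 2) 1) : rad 0 t = -1 := by
  rw [rad, pow_zero, one_mul, Int.fract_eq_self.2 ⟨by linarith [ht.1], ht.2⟩,
    if_neg (not_lt.2 ht.1)]

lemma Continuous.intervalIntegrable_comp_of_norm_le {E F : Type*} [NormedAddCommGroup E]
    [ProperSpace E] [NormedAddCommGroup F] {G : E → F} (hG : Continuous G) {f : ℝ → E}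
    (hf : AEStronglyMeasurable f) {M : ℝ} (hfM : ∀ t, ‖f t‖ ≤ M) (s u : ℝ) :
    IntervalIntegrable (fun t => G (f t)) volume s u := by
  obtain ⟨C, hC⟩ := (isCompact_closedBall (0 : E) M).exists_bound_of_continuousOn hG.continuousOn
  exact (intervalIntegrable_const (c := C)).mono_fun' (hG.comp_aestronglyMeasurable hf.restrict)
    (ae_of_all _ fun t => hC _ (mem_closedBall_zero_iff.2 (hfM t)))

section RadSum

variable {E : Type*} [NormedAddCommGroup E] [NormedSpace ℝ E]

noncomputable def radSum (a : ℕ → E) (N : ℕ) (t : ℝ) : E :=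
  ∑ n ∈ range N, rad n t • a n

lemma radSum_succ (a : ℕ → E) (N : ℕ) (t : ℝ) :
    radSum a (N + 1) t = radSum (fun n => a (n + 1)) N (2 * t) + rad 0 t • a 0 := by
  simp only [radSum, sum_range_succ', rad_succ]

lemma radSum_add_one (a : ℕ → E) (N : ℕ) (t : ℝ) : radSum a N (t + 1) = radSum a N t := by
  simp only [radSum, rad_add_one]

lemma norm_radSum_le (a : ℕ → E) (N : ℕ) (t : ℝ) : ‖radSum a N t‖ ≤ ∑ n ∈ range N, ‖a n‖ :=
  (norm_sum_le _ _).trans_eq <| sum_congr rfl fun n _ => by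
    rw [norm_smul, Real.norm_eq_abs, abs_rad, one_mul]

lemma stronglyMeasurable_radSum (a : ℕ → E) (N : ℕ) : StronglyMeasurable (radSum a N) := by
  unfold radSum
  exact Finset.stronglyMeasurable_fun_sum _ fun n _ =>
    (measurable_rad n).stronglyMeasurable.smul_const (a n)

lemma Continuous.intervalIntegrable_comp_radSum [ProperSpace E] {F : Type*}
    [NormedAddCommGroup F] {G : E → F} (hG : Continuous G) (a : ℕ → E) (N : ℕ) (s u : ℝ) :
    IntervalIntegrable (fun t => G (radSum a N t)) volume s u :=
  hG.intervalIntegrable_comp_of_norm_le (stronglyMeasurable_radSum a N).aestronglyMeasurable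
    (norm_radSum_le a N) s u

/-- Conditioning on the sign of `r₀`: the half of `[0,1]` where `r₀ = ±1` is mapped
affinely onto `[0,1]`, carrying `rₙ₊₁` to `rₙ`. -/
theorem integral_comp_radSum_succ [ProperSpace E] {G : E → ℝ} (hG : Continuous G)
    (a : ℕ → E) (N : ℕ) :
    ∫ t in (0 : ℝ)..1, G (radSum a (N + 1) t) =
      ∫ t in (0 : ℝ)..1, (G (radSum (fun n => a (n + 1)) N t + a 0) +
        G (radSum (fun n => a (n + 1)) N t - a 0)) / 2 := by
  set S := radSum (fun n => a (n + 1)) N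
  have hleft : ∫ t in (0 : ℝ)..1 / 2, G (radSum a (N + 1) t) =
      (∫ t in (0 : ℝ)..1, G (S t + a 0)) / 2 := by
    rw [intervalIntegral.integral_congr_Ioo_of_le (g := fun t => G (S (2 * t) + a 0))
      (by norm_num) fun t ht => by
        rw [radSum_succ, rad_zero_of_mem_Ico_zero_half ⟨ht.1.le, ht.2⟩, one_smul]]
    simp only [intervalIntegral.integral_comp_mul_left (fun t => G (S t + a 0)) two_ne_zero]
    norm_num [div_eq_inv_mul]
  have hright : ∫ t in (1 / 2 : ℝ)..1, G (radSum a (N + 1) t) =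
      (∫ t in (0 : ℝ)..1, G (S t - a 0)) / 2 := by
    rw [intervalIntegral.integral_congr_Ioo_of_le (g := fun t => G (S (2 * t - 1) - a 0))
      (by norm_num) fun t ht => by
        dsimp only [S]
        rw [radSum_succ, rad_zero_of_mem_Ico_half_one ⟨ht.1.le, ht.2⟩, neg_one_smul,
          ← sub_eq_add_neg, ← radSum_add_one _ _ (2 * t - 1), sub_add_cancel]]
    simp only [intervalIntegral.integral_comp_mul_sub (fun t => G (S t - a 0)) two_ne_zero]
    norm_num [div_eq_inv_mul]
  have hint : ∀ b : E, IntervalIntegrable (fun t => G (S t + b)) volume 0 1 := fun b =>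
    (hG.comp (continuous_add_const b)).intervalIntegrable_comp_radSum _ N 0 1
  rw [← intervalIntegral.integral_add_adjacent_intervals
      (hG.intervalIntegrable_comp_radSum a _ 0 _) (hG.intervalIntegrable_comp_radSum a _ _ 1),
    hleft, hright, intervalIntegral.integral_div,
    intervalIntegral.integral_add (hint _) (by simpa only [sub_eq_add_neg] using hint (-a 0)),
    add_div]

end RadSum

lemma norm_add_pow_four_add_norm_sub_pow_four_le {E : Type*} [NormedAddCommGroup E]
    [InnerProductSpace ℝ E] (y b : E) :
    ‖y + b‖ ^ 4 + ‖y - b‖ ^ 4 ≤ 2 * (‖y‖ ^ 4 + 6 * ‖b‖ ^ 2 * ‖y‖ ^ 2 + ‖b‖ ^ 4) := by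
  have hinner : inner ℝ y b ^ 2 ≤ ‖y‖ ^ 2 * ‖b‖ ^ 2 := by
    rw [← mul_pow, ← sq_abs]
    exact pow_le_pow_left₀ (abs_nonneg _) (abs_real_inner_le_norm y b) 2
  have h4 : ∀ z : E, ‖z‖ ^ 4 = (‖z‖ ^ 2) ^ 2 := fun z => by ring
  rw [h4, h4, norm_add_sq_real, norm_sub_sq_real]
  nlinarith [hinner]

lemma sq_intervalIntegral_mul_le {f g : ℝ → ℝ} {a b : ℝ} (hab : a ≤ b)
    (hf : IntervalIntegrable (fun t => f t ^ 2) volume a b)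
    (hg : IntervalIntegrable (fun t => g t ^ 2) volume a b)
    (hfg : IntervalIntegrable (fun t => f t * g t) volume a b) :
    (∫ t in a..b, f t * g t) ^ 2 ≤ (∫ t in a..b, f t ^ 2) * ∫ t in a..b, g t ^ 2 := by
  have hquad : ∀ x : ℝ, 0 ≤ (∫ t in a..b, f t ^ 2) * (x * x) +
      (-2 * ∫ t in a..b, f t * g t) * x + ∫ t in a..b, g t ^ 2 := fun x => by
    have h0 : 0 ≤ ∫ t in a..b, (x * f t - g t) ^ 2 :=
      intervalIntegral.integral_nonneg hab fun _ _ => sq_nonneg _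
    have hexp : (fun t => (x * f t - g t) ^ 2) =
        fun t => x ^ 2 * f t ^ 2 + ((-2 * x) * (f t * g t) + g t ^ 2) := by
      funext t; ring
    rw [hexp, intervalIntegral.integral_add (hf.const_mul _) ((hfg.const_mul _).add hg),
      intervalIntegral.integral_add (hfg.const_mul _) hg,
      intervalIntegral.integral_const_mul, intervalIntegral.integral_const_mul] at h0
    linarith
  have := discrim_le_zero hquad
  rw [discrim] at this
  linarith

/-- Littlewood's interpolation, via `‖f‖₂² ≤ ‖f‖₁^{1/2} ‖f‖₃^{3/2}` and `‖f‖₃³ ≤ ‖f‖₂ ‖f‖₄²`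
(Cauchy–Schwarz twice). -/
lemma intervalIntegral_sq_le_of_pow_four_le {f : ℝ → ℝ} (hf : AEStronglyMeasurable f)
    (hf0 : ∀ t, 0 ≤ f t) {M : ℝ} (hfM : ∀ t, ‖f t‖ ≤ M) {K : ℝ} (hK0 : 0 ≤ K)
    (hK : ∫ t in (0 : ℝ)..1, f t ^ 4 ≤ K * (∫ t in (0 : ℝ)..1, f t ^ 2) ^ 2) :
    ∫ t in (0 : ℝ)..1, f t ^ 2 ≤ K * (∫ t in (0 : ℝ)..1, f t) ^ 2 := by
  have hint : ∀ G : ℝ → ℝ, Continuous G → IntervalIntegrable (fun t => G (f t)) volume 0 1 :=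
    fun _ hG => hG.intervalIntegrable_comp_of_norm_le hf hfM 0 1
  set A := ∫ t in (0 : ℝ)..1, f t
  set B := ∫ t in (0 : ℝ)..1, f t ^ 2
  set D := ∫ t in (0 : ℝ)..1, f t ^ 3
  have hA : 0 ≤ A := intervalIntegral.integral_nonneg zero_le_one fun t _ => hf0 t
  have hB : 0 ≤ B := intervalIntegral.integral_nonneg zero_le_one fun t _ => sq_nonneg _
  have hBAD : B ^ 2 ≤ A * D := by
    have hcs := sq_intervalIntegral_mul_le (f := fun t => √(f t)) (g := fun t => f t * √(f t))
      zero_le_one (hint (fun x => √x ^ 2) (by fun_prop))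
      (hint (fun x => (x * √x) ^ 2) (by fun_prop)) (hint (fun x => √x * (x * √x)) (by fun_prop))
    have hsq : ∀ t, √(f t) ^ 2 = f t := fun t => Real.sq_sqrt (hf0 t)
    have hmid : ∀ t, √(f t) * (f t * √(f t)) = f t ^ 2 := fun t => by
      rw [mul_left_comm, ← sq, hsq, sq]
    have hcube : ∀ t, (f t * √(f t)) ^ 2 = f t ^ 3 := fun t => by
      rw [mul_pow, hsq]; ring
    simpa only [hmid, hcube, hsq] using hcs
  have hDBC : D ^ 2 ≤ B * ∫ t in (0 : ℝ)..1, f t ^ 4 := by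
    have hcs := sq_intervalIntegral_mul_le (f := f) (g := fun t => f t ^ 2)
      zero_le_one (hint (fun x => x ^ 2) (by fun_prop)) (hint (fun x => (x ^ 2) ^ 2) (by fun_prop))
      (hint (fun x => x * x ^ 2) (by fun_prop))
    simpa only [← pow_succ', ← pow_mul] using hcs
  rcases hB.eq_or_lt with hB0 | hBpos
  · rw [← hB0]; positivity
  · have : B ^ 3 * B ≤ B ^ 3 * (K * A ^ 2) := by
      nlinarith [mul_le_mul_of_nonneg_left hK (mul_nonneg hB (sq_nonneg A)),
        mul_le_mul_of_nonneg_left hDBC (sq_nonneg A), mul_self_le_mul_self (sq_nonneg B) hBAD]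
    exact le_of_mul_le_mul_left this (by positivity)

lemma le_of_eventually_rpow_le_mul_rpow {α β c : ℝ}
    (h : ∀ᶠ N : ℕ in atTop, (N : ℝ) ^ α ≤ c * (N : ℝ) ^ β) : α ≤ β := by
  by_contra! hβα
  have hgrow := (tendsto_rpow_atTop (sub_pos.2 hβα)).comp tendsto_natCast_atTop_atTop
  obtain ⟨N, hN, hcN, hN1⟩ :=
    (h.and ((hgrow.eventually_gt_atTop c).and (eventually_ge_atTop 1))).exists
  have hNpos : (0 : ℝ) < N := by exact_mod_cast hN1
  have : c * (N : ℝ) ^ β < (N : ℝ) ^ α := by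
    rw [← sub_add_cancel α β, Real.rpow_add hNpos]
    exact mul_lt_mul_of_pos_right hcN (Real.rpow_pos_of_pos hNpos β)
  linarith

lemma sum_le_sqrt_card_mul_sqrt_sum_sq {ι : Type*} (s : Finset ι) (f : ι → ℝ) :
    ∑ i ∈ s, f i ≤ √(#s) * √(∑ i ∈ s, f i ^ 2) := by
  rw [← Real.sqrt_mul (Nat.cast_nonneg _)]
  exact Real.le_sqrt_of_sq_le sq_sum_le_card_mul_sum_sq

section InnerProductSpace

variable {E : Type*} [NormedAddCommGroup E] [InnerProductSpace ℝ E] [ProperSpace E]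

lemma intervalIntegrable_norm_radSum_pow (a : ℕ → E) (N k : ℕ) :
    IntervalIntegrable (fun t => ‖radSum a N t‖ ^ k) volume 0 1 :=
  Continuous.intervalIntegrable_comp_radSum (G := fun y : E => ‖y‖ ^ k) (by fun_prop) a N 0 1

theorem integral_norm_radSum_sq (a : ℕ → E) (N : ℕ) :
    ∫ t in (0 : ℝ)..1, ‖radSum a N t‖ ^ 2 = ∑ n ∈ range N, ‖a n‖ ^ 2 := by
  induction N generalizing a with
  | zero => simp [radSum]
  | succ N ih =>
    have hpar : ∀ y : E, (‖y + a 0‖ ^ 2 + ‖y - a 0‖ ^ 2) / 2 = ‖y‖ ^ 2 + ‖a 0‖ ^ 2 := fun y => by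
      rw [parallelogram_law_with_norm ℝ]; ring
    rw [integral_comp_radSum_succ (G := fun y => ‖y‖ ^ 2) (by fun_prop), sum_range_succ']
    simp only [hpar]
    rw [intervalIntegral.integral_add (intervalIntegrable_norm_radSum_pow _ _ _)
      intervalIntegrable_const, ih, intervalIntegral.integral_const, sub_zero, one_smul]

theorem integral_norm_radSum_pow_four_le (a : ℕ → E) (N : ℕ) :
    ∫ t in (0 : ℝ)..1, ‖radSum a N t‖ ^ 4 ≤ 3 * (∑ n ∈ range N, ‖a n‖ ^ 2) ^ 2 := by
  induction N generalizing a with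
  | zero => simp [radSum]
  | succ N ih =>
    set S := radSum (fun n => a (n + 1)) N
    have hint := intervalIntegrable_norm_radSum_pow (fun n => a (n + 1)) N
    have hstep : ∫ t in (0 : ℝ)..1, ‖radSum a (N + 1) t‖ ^ 4 ≤
        ∫ t in (0 : ℝ)..1, (‖S t‖ ^ 4 + 6 * ‖a 0‖ ^ 2 * ‖S t‖ ^ 2 + ‖a 0‖ ^ 4) := by
      rw [integral_comp_radSum_succ (G := fun y => ‖y‖ ^ 4) (by fun_prop)]
      refine intervalIntegral.integral_mono_on zero_le_one ?_
        (((hint 4).add ((hint 2).const_mul _)).add intervalIntegrable_const) fun t _ => by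
          linarith [norm_add_pow_four_add_norm_sub_pow_four_le (S t) (a 0)]
      exact Continuous.intervalIntegrable_comp_radSum
        (G := fun y => (‖y + a 0‖ ^ 4 + ‖y - a 0‖ ^ 4) / 2) (by fun_prop) _ N 0 1
    rw [intervalIntegral.integral_add ((hint 4).add ((hint 2).const_mul _))
      intervalIntegrable_const, intervalIntegral.integral_add (hint 4) ((hint 2).const_mul _),
      intervalIntegral.integral_const_mul, integral_norm_radSum_sq,
      intervalIntegral.integral_const, sub_zero, one_smul] at hstep
    rw [sum_range_succ']
    nlinarith [ih (fun n => a (n + 1)), sum_nonneg fun n (_ : n ∈ range N) => sq_nonneg ‖a (n + 1)‖]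

theorem integral_norm_radSum_le_sqrt (a : ℕ → E) (N : ℕ) :
    ∫ t in (0 : ℝ)..1, ‖radSum a N t‖ ≤ √(∑ n ∈ range N, ‖a n‖ ^ 2) := by
  have hcs := sq_intervalIntegral_mul_le (f := fun t => ‖radSum a N t‖) (g := fun _ => 1)
    zero_le_one (intervalIntegrable_norm_radSum_pow a N 2) intervalIntegrable_const
    (by simpa using intervalIntegrable_norm_radSum_pow a N 1)
  simp only [mul_one, one_pow, intervalIntegral.integral_const, sub_zero, one_smul,
    integral_norm_radSum_sq] at hcs
  exact Real.le_sqrt_of_sq_le hcs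

theorem sqrt_le_sqrt_three_mul_integral_norm_radSum (a : ℕ → E) (N : ℕ) :
    √(∑ n ∈ range N, ‖a n‖ ^ 2) ≤ √3 * ∫ t in (0 : ℝ)..1, ‖radSum a N t‖ := by
  have h := intervalIntegral_sq_le_of_pow_four_le
    (stronglyMeasurable_radSum a N).aestronglyMeasurable.norm (fun t => norm_nonneg _)
    (fun t => (norm_norm _).trans_le (norm_radSum_le a N t)) zero_le_three
    (by simpa only [integral_norm_radSum_sq] using integral_norm_radSum_pow_four_le a N)
  rw [integral_norm_radSum_sq] at h
  rw [← Real.sqrt_sq (intervalIntegral.integral_nonneg zero_le_one fun t _ => norm_nonneg _),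
    ← Real.sqrt_mul zero_le_three]
  exact Real.sqrt_le_sqrt h

theorem half_le_of_sum_norm_le_mul_rpow_mul_integral [Nontrivial E] {σ c : ℝ} (hc : 0 ≤ c)
    (h : ∀ (N : ℕ) (a : ℕ → E),
      ∑ n ∈ range N, ‖a n‖ ≤ c * (N : ℝ) ^ σ * ∫ t in (0 : ℝ)..1, ‖radSum a N t‖) :
    1 / 2 ≤ σ := by
  obtain ⟨e, he⟩ := exists_norm_eq E zero_le_one
  suffices ∀ᶠ N : ℕ in atTop, (N : ℝ) ^ (1 : ℝ) ≤ c * (N : ℝ) ^ (σ + 1 / 2) by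
    linarith [le_of_eventually_rpow_le_mul_rpow this]
  filter_upwards [eventually_gt_atTop 0] with N hN
  have hNpos : (0 : ℝ) < N := by exact_mod_cast hN
  have hsum := h N fun _ => e
  have hint := integral_norm_radSum_le_sqrt (fun _ => e) N
  simp only [he, one_pow, sum_const, card_range, nsmul_eq_mul, mul_one] at hsum hint
  rw [Real.rpow_one, Real.rpow_add hNpos, ← Real.sqrt_eq_rpow, ← mul_assoc]
  exact hsum.trans (mul_le_mul_of_nonneg_left hint (by positivity))

theorem sum_norm_le_mul_rpow_half_mul_integral (a : ℕ → E) (N : ℕ) :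
    ∑ n ∈ range N, ‖a n‖ ≤ √3 * (N : ℝ) ^ (1 / 2 : ℝ) * ∫ t in (0 : ℝ)..1, ‖radSum a N t‖ :=
  calc ∑ n ∈ range N, ‖a n‖ ≤ √N * √(∑ n ∈ range N, ‖a n‖ ^ 2) := by
        simpa using sum_le_sqrt_card_mul_sqrt_sum_sq (range N) fun n => ‖a n‖
    _ ≤ √N * (√3 * ∫ t in (0 : ℝ)..1, ‖radSum a N t‖) :=
        mul_le_mul_of_nonneg_left (sqrt_le_sqrt_three_mul_integral_norm_radSum a N)
          (Real.sqrt_nonneg _)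
    _ = √3 * (N : ℝ) ^ (1 / 2 : ℝ) * ∫ t in (0 : ℝ)..1, ‖radSum a N t‖ := by
        rw [Real.sqrt_eq_rpow]; ring

end InnerProductSpace

/-- Hartman's theorem: any exponent `σ₀` with `∑_{n<N} |aₙ| ≤ c N^{σ₀} ∫₀¹ |∑ rₙ(t) aₙ| dt`
for all `N` and all tuples satisfies `σ₀ ≥ 1/2` (take `aₙ = 1`, using Khinchin's upper
bound `∫₀¹ |∑ rₙ aₙ| ≤ (∑|aₙ|²)^{1/2}`); consequently the strip width
`S^rad_{c→a}(ℂ)`, in its Maurizi–Queffélec reformulation as an infimum of admissible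
exponents, equals `1/2`. -/
theorem hartman_half :
    (∀ σ₀ c : ℝ, 0 < c →
      (∀ (N : ℕ) (a : ℕ → ℂ),
        ∑ n ∈ Finset.range N, ‖a n‖ ≤
          c * (N : ℝ) ^ σ₀ *
            ∫ t in (0:ℝ)..1, ‖∑ n ∈ Finset.range N, rad n t • a n‖) →
      1 / 2 ≤ σ₀) ∧
    sInf {σ : ℝ | 0 < σ ∧ ∃ c > (0:ℝ), ∀ (N : ℕ) (a : ℕ → ℂ),
        ∑ n ∈ Finset.range N, ‖a n‖ ≤
          c * (N : ℝ) ^ σ *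
            ∫ t in (0:ℝ)..1, ‖∑ n ∈ Finset.range N, rad n t • a n‖} =
      1 / 2 := by
  refine ⟨fun σ₀ c hc h => half_le_of_sum_norm_le_mul_rpow_mul_integral hc.le h,
    IsLeast.csInf_eq ⟨⟨one_half_pos, √3, by positivity, fun N a => ?_⟩, ?_⟩⟩
  · exact sum_norm_le_mul_rpow_half_mul_integral a N
  · rintro σ ⟨-, c, hc, h⟩
    exact half_le_of_sum_norm_le_mul_rpow_mul_integral hc.le h
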